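/- Let K ≥ 2, 1 ≤ t < K, t ≤ α ≤ K - t. Fix a pair (p,k) with V[p,k] = 0. Then there exist exactly t rounds r ∈ [K] such that k appears among the first t entries of the user vectors of round r, and in each such round there is exactly one transmission index j ∈ [K-t] with p = p_j^r[n] and k = k_j^r[n] for the matching position n ∈ [t]. -/

import Mathlib

/-- The mod operator with offset one. -/
def pmod (a b : ℕ) : ℕ := (a - 1) % b + 1

/-- The cyclic placement matrix: `V K t p k = 1` iff `(k - p) mod K ∈ {0,…,t-1}`. -/
noncomputable def V (K t p k : ℕ) : ℕ :=
  if ((k : ℤ) - (p : ℤ)) % (K : ℤ) ∈ Finset.Ico (0 : ℤ) (t : ℤ) then 1 else 0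

/-- Entry `n` of the round-1 user index vector `k_j¹`. -/
def kvec1 (K t j n : ℕ) : ℕ :=
  if n ≤ t then n else pmod (n - t + j - 1) (K - t) + t

/-- Entry `n` of the round-1 packet index vector `p_j¹`. -/
def pvec1 (K t j n : ℕ) : ℕ :=
  if n ≤ t then pmod (t + j - n) (K - t) + n else 1

/-- Entry `n` of the round-`r` user index vector `k_j^r = (k_j¹ + r) % K`. -/
def kvec (K t j r n : ℕ) : ℕ := pmod (kvec1 K t j n + r) K

/-- Entry `n` of the round-`r` packet index vector `p_j^r = (p_j¹ + r) % K`. -/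
def pvec (K t j r n : ℕ) : ℕ := pmod (pvec1 K t j n + r) K

/-!
For a position `n ≤ t`, round `r` and transmission `j` deliver packet `p` to user `k` exactly
when `k ≡ n + r (mod K)` and `p ≡ s + k (mod K)`, where `s ∈ {1, …, K - t}` is the
representative of `t + j - n` modulo `K - t`. Since `V[p,k] = 0`, `p - k` is congruent modulo `K`
to a unique `q ∈ {1, …, K - t}`, which forces `s = q`, i.e. `j ≡ q + n - t (mod K - t)`: a
unique `j`. A round `r` admits a position `n` iff `r ≡ k - n (mod K)`, and the `t` positions give
`t` distinct residues `k - n`. All of this is arithmetic in `ZMod`, because `{1, …, b}` is a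
system of representatives modulo `b`, namely the one that `pmod` selects.
-/

open Finset

lemma pmod_mem_Icc {b : ℕ} (hb : 0 < b) (a : ℕ) : pmod a b ∈ Icc 1 b := by
  have := Nat.mod_lt (a - 1) hb
  simp only [pmod, mem_Icc]
  omega

lemma natCast_pmod {a : ℕ} (b : ℕ) (ha : 1 ≤ a) : ((pmod a b : ℕ) : ZMod b) = a := by
  rw [pmod, Nat.cast_add, ZMod.natCast_mod, ← Nat.cast_add, Nat.sub_add_cancel ha]

lemma natCast_injOn_Icc (b : ℕ) : Set.InjOn (Nat.cast : ℕ → ZMod b) (Icc 1 b) := by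
  intro x hx y hy h
  simp only [coe_Icc, Set.mem_Icc] at hx hy
  exact ((ZMod.natCast_eq_natCast_iff x y b).1 h).eq_of_abs_lt
    (abs_sub_lt_iff.2 ⟨by omega, by omega⟩)

lemma exists_mem_Icc_natCast_eq {b : ℕ} [NeZero b] (z : ZMod b) :
    ∃ x ∈ Icc 1 b, (x : ZMod b) = z :=
  ⟨pmod (z.val + b) b, pmod_mem_Icc (NeZero.pos b) _, by
    rw [natCast_pmod b (by have := NeZero.pos b; omega)]
    simp⟩

lemma eq_pmod_iff {a b x : ℕ} (ha : 1 ≤ a) (hx : x ∈ Icc 1 b) :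
    x = pmod a b ↔ (x : ZMod b) = a := by
  have hb : 0 < b := by simp only [mem_Icc] at hx; omega
  rw [← natCast_pmod b ha]
  exact ⟨congrArg _, fun h => natCast_injOn_Icc b hx (pmod_mem_Icc hb a) h⟩

lemma card_filter_Icc_eq_card_filter_univ {b : ℕ} [NeZero b] {Q : ℕ → Prop} [DecidablePred Q]
    (P : ZMod b → Prop) [DecidablePred P] (hQP : ∀ x ∈ Icc 1 b, Q x ↔ P x) :
    ((Icc 1 b).filter Q).card = (univ.filter P).card :=
  card_nbij Nat.cast
    (fun x hx => by
      obtain ⟨hx, hQ⟩ := mem_filter.1 hx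
      exact mem_filter.2 ⟨mem_univ _, (hQP x hx).1 hQ⟩)
    ((natCast_injOn_Icc b).mono fun x hx => (mem_filter.1 hx).1)
    (fun z hz => by
      obtain ⟨x, hx, rfl⟩ := exists_mem_Icc_natCast_eq z
      exact ⟨x, mem_filter.2 ⟨hx, (hQP x hx).2 (mem_filter.1 hz).2⟩, rfl⟩)

lemma card_filter_exists_add_eq {K t : ℕ} [NeZero K] (htK : t ≤ K) (k : ZMod K) :
    (univ.filter fun z : ZMod K => ∃ n ∈ (Icc 1 t : Finset ℕ), (n : ZMod K) + z = k).card = t := by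
  have himage : (univ.filter fun z : ZMod K => ∃ n ∈ (Icc 1 t : Finset ℕ), (n : ZMod K) + z = k) =
      (Icc 1 t).image fun n : ℕ => k - n := by
    ext z
    simp only [mem_filter, mem_univ, true_and, mem_image, sub_eq_iff_eq_add', @eq_comm _ k]
  rw [himage, card_image_of_injOn, Nat.card_Icc, Nat.add_sub_cancel]
  intro n hn m hm h
  exact (natCast_injOn_Icc K).mono (coe_subset.2 (Icc_subset_Icc_right htK)) hn hm
    (sub_right_injective h)

lemma kvec_of_le {K t j r n : ℕ} (hn : n ≤ t) : kvec K t j r n = pmod (n + r) K := by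
  simp [kvec, kvec1, hn]

lemma pvec_of_le {K t j r n : ℕ} (hn : n ≤ t) :
    pvec K t j r n = pmod (pmod (t + j - n) (K - t) + n + r) K := by
  simp [pvec, pvec1, hn]

lemma exists_shift_of_V_eq_zero {K t p k : ℕ} (hK : 0 < K) (h : V K t p k = 0) :
    ∃ q ∈ Icc 1 (K - t), (p : ZMod K) = q + k := by
  have hK' : (0 : ℤ) < K := by exact_mod_cast hK
  obtain ⟨δ, hδ⟩ := Int.eq_ofNat_of_zero_le (Int.emod_nonneg ((k : ℤ) - p) hK'.ne')
  have hδK := Int.emod_lt_of_pos ((k : ℤ) - p) hK'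
  have htδ : t ≤ δ := by
    by_contra hlt
    simp [V, hδ, show (δ : ℤ) < t by omega] at h
  have hcast : (δ : ZMod K) = k - p := by
    rw [← Int.cast_natCast, ← hδ, ZMod.intCast_mod]
    push_cast
    ring
  refine ⟨K - δ, mem_Icc.2 ⟨by omega, by omega⟩, ?_⟩
  rw [Nat.cast_sub (by omega), ZMod.natCast_self, hcast]
  ring

lemma pmod_sub_eq_iff {K t j n q : ℕ} (hj : 1 ≤ j) (hn : n ≤ t) (hq : q ∈ Icc 1 (K - t)) :
    pmod (t + j - n) (K - t) = q ↔ (j : ZMod (K - t)) = q + n - t := by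
  rw [eq_comm, eq_pmod_iff (by omega) hq, Nat.cast_sub (by omega)]
  push_cast
  constructor <;> intro h <;> linear_combination -h

lemma pvec_kvec_eq_iff {K t p k q j r n : ℕ} (hp : p ∈ Icc 1 K) (hk : k ∈ Icc 1 K)
    (hq : q ∈ Icc 1 (K - t)) (hpq : (p : ZMod K) = q + k) (hj : j ∈ Icc 1 (K - t))
    (hn : n ∈ Icc 1 t) :
    p = pvec K t j r n ∧ k = kvec K t j r n ↔
      (n : ZMod K) + r = k ∧ (j : ZMod (K - t)) = q + n - t := by
  simp only [mem_Icc] at hp hk hq hj hn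
  have hs : pmod (t + j - n) (K - t) ∈ Icc 1 K := by
    have := pmod_mem_Icc (show 0 < K - t by omega) (t + j - n)
    simp only [mem_Icc] at this ⊢
    omega
  rw [pvec_of_le hn.2, kvec_of_le hn.2, eq_pmod_iff (by omega) (mem_Icc.2 hp),
    eq_pmod_iff (by omega) (mem_Icc.2 hk), ← pmod_sub_eq_iff hj.1 hn.2 (mem_Icc.2 hq), hpq]
  push_cast
  have hqs : (q : ZMod K) = pmod (t + j - n) (K - t) ↔ pmod (t + j - n) (K - t) = q :=
    ⟨fun h => (natCast_injOn_Icc K (mem_Icc.2 ⟨hq.1, by omega⟩) hs h).symm, fun h => h ▸ rfl⟩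
  constructor
  · rintro ⟨hsp, hnr⟩
    refine ⟨hnr.symm, hqs.1 ?_⟩
    linear_combination hsp - hnr
  · rintro ⟨hnr, hsq⟩
    refine ⟨?_, hnr.symm⟩
    linear_combination hqs.2 hsq - hnr

lemma exists_transmission_pvec_kvec_eq_iff {K t p k q : ℕ} (hp : p ∈ Icc 1 K)
    (hk : k ∈ Icc 1 K) (hq : q ∈ Icc 1 (K - t)) (hpq : (p : ZMod K) = q + k) (r : ℕ) :
    (∃ j ∈ Icc 1 (K - t), ∃ n ∈ Icc 1 t, p = pvec K t j r n ∧ k = kvec K t j r n) ↔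
      ∃ n ∈ Icc 1 t, (n : ZMod K) + r = k := by
  have : NeZero (K - t) := ⟨by simp only [mem_Icc] at hq; omega⟩
  constructor
  · rintro ⟨j, hj, n, hn, hdel⟩
    exact ⟨n, hn, ((pvec_kvec_eq_iff hp hk hq hpq hj hn).1 hdel).1⟩
  · rintro ⟨n, hn, hnr⟩
    obtain ⟨j, hj, hjq⟩ := exists_mem_Icc_natCast_eq (b := K - t) (q + n - t)
    exact ⟨j, hj, n, hn, (pvec_kvec_eq_iff hp hk hq hpq hj hn).2 ⟨hnr, hjq⟩⟩

lemma exists_position_pvec_kvec_eq_iff {K t p k q r n₀ j : ℕ} (hp : p ∈ Icc 1 K)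
    (hk : k ∈ Icc 1 K) (hq : q ∈ Icc 1 (K - t)) (hpq : (p : ZMod K) = q + k)
    (hn₀ : n₀ ∈ Icc 1 t) (hn₀r : (n₀ : ZMod K) + r = k) (hj : j ∈ Icc 1 (K - t)) :
    (∃ n ∈ Icc 1 t, p = pvec K t j r n ∧ k = kvec K t j r n) ↔
      (j : ZMod (K - t)) = q + n₀ - t := by
  constructor
  · rintro ⟨n, hn, hdel⟩
    obtain ⟨hnr, hjq⟩ := (pvec_kvec_eq_iff hp hk hq hpq hj hn).1 hdel
    have hsub : Icc 1 t ⊆ Icc 1 K := Icc_subset_Icc_right (by simp only [mem_Icc] at hq; omega)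
    obtain rfl : n = n₀ := natCast_injOn_Icc K (hsub hn) (hsub hn₀)
      (by linear_combination hnr - hn₀r)
    exact hjq
  · exact fun hjq => ⟨n₀, hn₀, (pvec_kvec_eq_iff hp hk hq hpq hj hn₀).2 ⟨hn₀r, hjq⟩⟩

open Classical in
theorem vertical_component_counting_general (K t : ℕ) (p k : ℕ) (hp : p ∈ Finset.Icc 1 K)
    (hk : k ∈ Finset.Icc 1 K) (hzero : V K t p k = 0) :
    ((Finset.Icc 1 K).filter (fun r => ∃ j ∈ Finset.Icc 1 (K - t),
        ∃ n ∈ Finset.Icc 1 t,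
          p = pvec K t j r n ∧ k = kvec K t j r n)).card = t ∧
    ∀ r ∈ Finset.Icc 1 K,
      (∃ j ∈ Finset.Icc 1 (K - t), ∃ n ∈ Finset.Icc 1 t,
          p = pvec K t j r n ∧ k = kvec K t j r n) →
      ((Finset.Icc 1 (K - t)).filter (fun j => ∃ n ∈ Finset.Icc 1 t,
          p = pvec K t j r n ∧ k = kvec K t j r n)).card = 1 := by
  have hK : 0 < K := by simp only [mem_Icc] at hp; omega
  obtain ⟨q, hq, hpq⟩ := exists_shift_of_V_eq_zero hK hzero
  have htK : t < K := by simp only [mem_Icc] at hq; omega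
  have : NeZero K := ⟨hK.ne'⟩
  have : NeZero (K - t) := ⟨by omega⟩
  -- `convert` absorbs the mismatch with the classical `DecidablePred` instances of the statement
  constructor
  · convert (card_filter_Icc_eq_card_filter_univ _ fun r _ =>
      exists_transmission_pvec_kvec_eq_iff hp hk hq hpq r).trans
        (card_filter_exists_add_eq htK.le k)
  · rintro r - hr
    obtain ⟨n₀, hn₀, hn₀r⟩ := (exists_transmission_pvec_kvec_eq_iff hp hk hq hpq r).1 hr
    have hunique : (univ.filter fun z : ZMod (K - t) => z = q + n₀ - t).card = 1 := by
      rw [filter_eq', if_pos (mem_univ _), card_singleton]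
    convert (card_filter_Icc_eq_card_filter_univ _ fun j hj =>
      exists_position_pvec_kvec_eq_iff hp hk hq hpq hn₀ hn₀r hj).trans hunique

open Classical in
theorem vertical_component_counting (K t α : ℕ) (hK : 2 ≤ K) (ht : 1 ≤ t) (htK : t < K)
    (htα : t ≤ α) (hαK : α ≤ K - t) (p k : ℕ) (hp : p ∈ Finset.Icc 1 K)
    (hk : k ∈ Finset.Icc 1 K) (hzero : V K t p k = 0) :
    ((Finset.Icc 1 K).filter (fun r => ∃ j ∈ Finset.Icc 1 (K - t),
        ∃ n ∈ Finset.Icc 1 t,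
          p = pvec K t j r n ∧ k = kvec K t j r n)).card = t ∧
    ∀ r ∈ Finset.Icc 1 K,
      (∃ j ∈ Finset.Icc 1 (K - t), ∃ n ∈ Finset.Icc 1 t,
          p = pvec K t j r n ∧ k = kvec K t j r n) →
      ((Finset.Icc 1 (K - t)).filter (fun j => ∃ n ∈ Finset.Icc 1 t,
          p = pvec K t j r n ∧ k = kvec K t j r n)).card = 1 :=
  vertical_component_counting_general K t p k hp hk hzero
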